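/- arXiv:1112.1346 — 2 statements merged into one kernel-verified Lean document; each statement's English description precedes it below -/
import Mathlib

section
/- Let (V,g) be an n-dimensional real inner product space and let ω₁, ω₂ be (p,q)-double forms on V. Then the inner product of ω₁ and ω₂ equals (1/p!) times the full contraction of the composition product of the transpose of one with the other: ⟨ω₁,ω₂⟩ = (1/p!)·c^p(ω₂^t ∘ ω₁) = (1/p!)·c^p(ω₁^t ∘ ω₂). -/
noncomputable section

open Finset

/-- Double forms over an `n`-dimensional real inner product space, described by their
coefficients in a fixed orthonormal basis: a `(p,q)`-double form corresponds to a function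
supported on pairs of subsets of cardinalities `p` and `q`. -/
abbrev DForm (n : ℕ) := Finset (Fin n) → Finset (Fin n) → ℝ

namespace DForm

variable {n : ℕ}

/-- Sign of the shuffle placing the elements of `A` (in increasing order) before
those of `B` (in increasing order). -/
def shuffleSign (A B : Finset (Fin n)) : ℝ :=
  (-1 : ℝ) ^ (∑ x ∈ B, (A.filter fun a => x < a).card)

/-- The exterior product of double forms. -/
def wedge (ω₁ ω₂ : DForm n) : DForm n := fun I J =>
  ∑ A ∈ I.powerset, ∑ B ∈ J.powerset,
    shuffleSign A (I \ A) * shuffleSign B (J \ B) * ω₁ A B * ω₂ (I \ A) (J \ B)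

/-- Exterior powers `ω^k` of a double form. -/
def dpow (ω : DForm n) : ℕ → DForm n
  | 0 => fun I J => if I = ∅ ∧ J = ∅ then 1 else 0
  | k + 1 => wedge ω (dpow ω k)

/-- The double Hodge star operator. -/
def hstar (ω : DForm n) : DForm n := fun I J =>
  shuffleSign Iᶜ I * shuffleSign Jᶜ J * ω Iᶜ Jᶜ

/-- The contraction `c` of double forms. -/
def contr (ω : DForm n) : DForm n := fun I J =>
  ∑ j : Fin n,
    if j ∈ I ∨ j ∈ J then 0
    else shuffleSign {j} I * shuffleSign {j} J * ω (insert j I) (insert j J)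

/-- Iterated contraction `c^k`. -/
def citer (ω : DForm n) : ℕ → DForm n
  | 0 => ω
  | k + 1 => contr (citer ω k)

/-- The inner product of double forms. -/
def dinner (ω₁ ω₂ : DForm n) : ℝ :=
  ∑ I : Finset (Fin n), ∑ J : Finset (Fin n), ω₁ I J * ω₂ I J

/-- The transpose `ω^t` of a double form. -/
def transp (ω : DForm n) : DForm n := fun I J => ω J I

/-- The composition (Greub) product `ω₁ ∘ ω₂` of double forms. -/
def comp (ω₁ ω₂ : DForm n) : DForm n := fun I J =>
  ∑ K : Finset (Fin n), ω₂ I K * ω₁ K J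

/-- The scalar value of a `(0,0)`-double form. -/
def toScalar (ω : DForm n) : ℝ := ω ∅ ∅

/-- The metric, as a `(1,1)`-double form. -/
def gMetric (n : ℕ) : DForm n := fun I J => if I = J ∧ I.card = 1 then 1 else 0

/-- Iterated composition power `ω^{∘r}` of a `(1,1)`-double form, with `ω^{∘0} = g`. -/
def cpow (ω : DForm n) : ℕ → DForm n
  | 0 => gMetric n
  | r + 1 => comp ω (cpow ω r)

/-- The `(1,1)`-double form associated to a bilinear form, given by its matrix in the
orthonormal basis. -/
def ofMatrix (h : Matrix (Fin n) (Fin n) ℝ) : DForm n := fun I J =>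
  ∑ i : Fin n, ∑ j : Fin n, if I = {i} ∧ J = {j} then h i j else 0

/-- `ω` is a `(p,q)`-double form. -/
def IsOfDeg (ω : DForm n) (p q : ℕ) : Prop :=
  ∀ I J : Finset (Fin n), ω I J ≠ 0 → I.card = p ∧ J.card = q

/-- `ω` is a symmetric double form. -/
def IsSym (ω : DForm n) : Prop := ∀ I J, ω I J = ω J I

/-- The sign relating `e_{v 0} ∧ ⋯ ∧ e_{v (p-1)}` to the corresponding increasing
basis `p`-vector (and `0` if the indices are not pairwise distinct). -/
def tupleSign {p : ℕ} (v : Fin p → Fin n) : ℝ :=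
  if Function.Injective v then (((Equiv.Perm.sign (Tuple.sort v)) : ℤ) : ℝ) else 0

/-- Evaluation of a double form on wedges of basis vectors indexed by arbitrary tuples. -/
def evalT (ω : DForm n) {p q : ℕ} (v : Fin p → Fin n) (w : Fin q → Fin n) : ℝ :=
  tupleSign v * tupleSign w * ω (Finset.image v Finset.univ) (Finset.image w Finset.univ)

/-- The first Bianchi identity for a `(2,2)`-double form:
`R(x∧y,z∧t) + R(y∧z,x∧t) + R(z∧x,y∧t) = 0`. -/
def Bianchi2 (R : DForm n) : Prop :=
  ∀ x y z t : Fin n,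
    evalT R ![x, y] ![z, t] + evalT R ![y, z] ![x, t] + evalT R ![z, x] ![y, t] = 0

/-- The first Bianchi identity for a `(p,p)`-double form. -/
def FirstBianchi (ω : DForm n) (p : ℕ) : Prop :=
  ∀ (x : Fin (p + 1) → Fin n) (y : Fin (p - 1) → Fin n),
    ∑ j : Fin (p + 1),
      (-1 : ℝ) ^ (j : ℕ) * evalT ω (x ∘ Fin.succAbove j) (Fin.cons (x j) y) = 0

/-- The characteristic coefficient `s_k(h)` of a bilinear form `h`, defined through the
characteristic polynomial: `det(h - λ g) = ∑ (-1)^(n-i) s_i(h) λ^(n-i)`. -/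
def sInv (h : Matrix (Fin n) (Fin n) ℝ) (k : ℕ) : ℝ :=
  (-1 : ℝ) ^ k * (Matrix.charpoly h).coeff (n - k)

/-- The `k`-th cofactor (Newton) transformation `t_k(h) = (1/(k!(n-1-k)!)) *(g^{n-1-k} h^k)`. -/
def tInv (h : Matrix (Fin n) (Fin n) ℝ) (k : ℕ) : DForm n :=
  ((k.factorial * (n - 1 - k).factorial : ℕ) : ℝ)⁻¹ •
    hstar (wedge (dpow (gMetric n) (n - 1 - k)) (dpow (ofMatrix h) k))

/-- The `(r,q)`-cofactor `s_{(r,q)}(h) = (1/(q!(n-q-r)!)) *(g^{n-q-r} h^q)`. -/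
def sCof (h : Matrix (Fin n) (Fin n) ℝ) (r q : ℕ) : DForm n :=
  ((q.factorial * (n - q - r).factorial : ℕ) : ℝ)⁻¹ •
    hstar (wedge (dpow (gMetric n) (n - q - r)) (dpow (ofMatrix h) q))

end DForm

/-!
Write `tr η = ∑ I, η(I, I)`. Unfolding the definitions, `tr (ω₂ᵗ ∘ ω₁) = ⟨ω₁, ω₂⟩`, and
`ω₂ᵗ ∘ ω₁` is a `(p,p)`-double form. One contraction of a `(p+1,p+1)`-form `η` has trace
`∑ I, |I| η(I, I) = (p+1) tr η`, since each diagonal coefficient `η(I, I)` is reached once from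
`I.erase j` for every `j ∈ I`; hence `c^p η = p! tr η` for every `(p,p)`-form `η`.
-/

theorem Finset.sum_sum_compl_insert {α M : Type*} [Fintype α] [DecidableEq α]
    [AddCommMonoid M] (f : Finset α → M) :
    ∑ I : Finset α, ∑ j ∈ Iᶜ, f (insert j I) = ∑ I : Finset α, I.card • f I := by
  simp_rw [← Finset.sum_const]
  rw [Finset.sum_sigma', Finset.sum_sigma']
  refine Finset.sum_nbij' (fun x => ⟨insert x.2 x.1, x.2⟩) (fun x => ⟨x.1.erase x.2, x.2⟩)
    ?_ ?_ ?_ ?_ fun _ _ => rfl <;>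
  · rintro ⟨I, j⟩ hj
    simp_all

namespace DForm

variable {n : ℕ}

def trace (η : DForm n) : ℝ := ∑ I : Finset (Fin n), η I I

theorem shuffleSign_mul_self (A B : Finset (Fin n)) :
    shuffleSign A B * shuffleSign A B = 1 := by
  rw [shuffleSign, ← pow_add]
  exact Even.neg_one_pow ⟨_, rfl⟩

theorem trace_contr (η : DForm n) :
    trace (contr η) = ∑ I : Finset (Fin n), (I.card : ℝ) * η I I := by
  simp_rw [← nsmul_eq_mul, ← Finset.sum_sum_compl_insert]
  refine Finset.sum_congr rfl fun I _ => ?_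
  rw [contr, Finset.sum_ite, Finset.sum_const_zero, zero_add]
  refine Finset.sum_congr (by ext j; simp) fun j _ => ?_
  rw [shuffleSign_mul_self, one_mul]

theorem citer_succ_eq_citer_contr (η : DForm n) (k : ℕ) :
    citer η (k + 1) = citer (contr η) k := by
  induction k with
  | zero => rfl
  | succ k ih => exact congrArg contr ih

theorem trace_comp_transp (ω₁ ω₂ : DForm n) : trace (comp (transp ω₂) ω₁) = dinner ω₁ ω₂ :=
  rfl

theorem dinner_comm (ω₁ ω₂ : DForm n) : dinner ω₁ ω₂ = dinner ω₂ ω₁ := by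
  unfold dinner
  exact Finset.sum_congr rfl fun I _ => Finset.sum_congr rfl fun J _ => mul_comm _ _

namespace IsOfDeg

variable {η ω₁ ω₂ : DForm n} {p q : ℕ}

theorem contr (h : IsOfDeg η (p + 1) (q + 1)) : IsOfDeg (contr η) p q := by
  intro I J hne
  obtain ⟨j, -, hj⟩ := Finset.exists_ne_zero_of_sum_ne_zero hne
  have hjIJ : j ∉ I ∧ j ∉ J := by
    by_contra hmem
    rw [if_pos (by tauto)] at hj
    exact hj rfl
  rw [if_neg (by tauto)] at hj
  have hcard := h _ _ (right_ne_zero_of_mul hj)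
  rw [Finset.card_insert_of_notMem hjIJ.1, Finset.card_insert_of_notMem hjIJ.2] at hcard
  exact ⟨by omega, by omega⟩

theorem trace_contr (h : IsOfDeg η (p + 1) q) : trace (DForm.contr η) = (p + 1) * trace η := by
  rw [DForm.trace_contr, trace, Finset.mul_sum]
  refine Finset.sum_congr rfl fun I _ => ?_
  by_cases h0 : η I I = 0
  · simp [h0]
  · rw [(h I I h0).1]
    push_cast
    ring

theorem toScalar_eq_trace (h : IsOfDeg η 0 q) : toScalar η = trace η := by
  rw [toScalar, trace, Finset.sum_eq_single ∅ (fun I _ hI => ?_) (by simp)]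
  by_contra h0
  exact hI (Finset.card_eq_zero.mp (h I I h0).1)

theorem toScalar_citer (h : IsOfDeg η p p) : toScalar (citer η p) = p.factorial * trace η := by
  induction p generalizing η with
  | zero => rw [citer, h.toScalar_eq_trace, Nat.factorial_zero, Nat.cast_one, one_mul]
  | succ p ih =>
    rw [citer_succ_eq_citer_contr, ih h.contr, h.trace_contr, Nat.factorial_succ]
    push_cast
    ring

theorem comp_transp (h₁ : IsOfDeg ω₁ p q) (h₂ : IsOfDeg ω₂ p q) :
    IsOfDeg (comp (transp ω₂) ω₁) p p := by
  intro I J hne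
  obtain ⟨K, -, hK⟩ := Finset.exists_ne_zero_of_sum_ne_zero hne
  exact ⟨(h₁ I K (left_ne_zero_of_mul hK)).1, (h₂ J K (right_ne_zero_of_mul hK)).1⟩

theorem dinner_eq (h₁ : IsOfDeg ω₁ p q) (h₂ : IsOfDeg ω₂ p q) :
    dinner ω₁ ω₂ = (p.factorial : ℝ)⁻¹ * toScalar (citer (comp (transp ω₂) ω₁) p) := by
  rw [(h₁.comp_transp h₂).toScalar_citer, trace_comp_transp, inv_mul_cancel_left₀]
  exact_mod_cast p.factorial_ne_zero

end IsOfDeg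

end DForm

open DForm in
/-- The inner product of two `(p,q)`-double forms is `(1/p!)` times the full contraction of
`ω₂ᵗ ∘ ω₁`, and also of `ω₁ᵗ ∘ ω₂`. -/
theorem statement0 (n p q : ℕ) (ω₁ ω₂ : DForm n)
    (h₁ : IsOfDeg ω₁ p q) (h₂ : IsOfDeg ω₂ p q) :
    dinner ω₁ ω₂ = ((p.factorial : ℝ))⁻¹ * toScalar (citer (comp (transp ω₂) ω₁) p) ∧
    dinner ω₁ ω₂ = ((p.factorial : ℝ))⁻¹ * toScalar (citer (comp (transp ω₁) ω₂) p) :=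
  ⟨h₁.dinner_eq h₂, (dinner_comm ω₁ ω₂).trans (h₂.dinner_eq h₁)⟩
end
end

section
/- Let (e_i) be an orthonormal basis of an n-dimensional real inner product space (V,g), h a bilinear form on V, and k,r ≥ 0 with k+r ≤ n. Then for any indices i₁ < i₂ < … < i_{k+r}, the exterior product g^k h^r satisfies g^k h^r(e_{i₁}∧…∧e_{i_{k+r}}, e_{i₁}∧…∧e_{i_{k+r}}) = k!·r!·s_r(M), where M is the (k+r)×(k+r) matrix with entries h(e_{i_a}, e_{i_b}) (1 ≤ a,b ≤ k+r) and s_r(M) denotes the r-th characteristic coefficient of M, i.e. the sum of its principal r×r minors. -/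
/-!
Expanding `h^(r+1) = h · h^r` along its first factor and reindexing both sums by the increasing
enumerations of the index sets turns the recursion into Laplace expansions, so
`h^r(A, B) = r! · det h_{A,B}`. Since `g` is the `(1,1)`-form of the identity matrix,
`g^k(A, B) = k! δ_{AB}` on `k`-sets. In `g^k h^r(I, I)` only the terms with `A = B` survive, their
two shuffle signs cancel, and what remains is `k! r!` times the sum of the principal `r × r`
minors of `h_{I,I}`, which is its characteristic coefficient `s_r`.
-/

noncomputable section

open Finset

/-- The characteristic coefficient `s_r` of a square matrix. -/
noncomputable def sMat {m : ℕ} (M : Matrix (Fin m) (Fin m) ℝ) (r : ℕ) : ℝ :=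
  (-1 : ℝ) ^ r * (Matrix.charpoly M).coeff (m - r)

namespace Finset

section LinearOrder

variable {α : Type*} [LinearOrder α]

theorem sum_orderEmbOfFin {M : Type*} [AddCommMonoid M] (s : Finset α) {k : ℕ} (h : #s = k)
    (f : α → M) : ∑ x ∈ s, f x = ∑ i, f (s.orderEmbOfFin h i) := by
  conv_lhs => rw [← s.map_orderEmbOfFin_univ h, sum_map]
  rfl

theorem card_filter_lt_orderEmbOfFin (s : Finset α) {k : ℕ} (h : #s = k) (i : Fin k) :
    #{x ∈ s | x < s.orderEmbOfFin h i} = i := by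
  set e := s.orderEmbOfFin h
  have hs : univ.map e.toEmbedding = s := s.map_orderEmbOfFin_univ h
  calc #{x ∈ s | x < e i} = #{x ∈ univ.map e.toEmbedding | x < e i} := by rw [hs]
    _ = #(Iio i) := by rw [filter_map, card_map]; congr 1; ext; simp
    _ = i := Fin.card_Iio i

theorem orderEmbOfFin_erase (s : Finset α) {k : ℕ} (h : #s = k + 1) (i : Fin (k + 1))
    (h' : #(s.erase (s.orderEmbOfFin h i)) = k) :
    ⇑((s.erase (s.orderEmbOfFin h i)).orderEmbOfFin h') = s.orderEmbOfFin h ∘ i.succAbove :=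
  (orderEmbOfFin_unique h' (fun j => by simp [Fin.succAbove_ne])
    ((s.orderEmbOfFin h).strictMono.comp (Fin.strictMono_succAbove i))).symm

end LinearOrder

theorem sum_powersetCard_sdiff {α M : Type*} [DecidableEq α] [AddCommMonoid M] {s : Finset α}
    {k r : ℕ} (hs : #s = k + r) (f : Finset α → M) :
    ∑ A ∈ s.powersetCard k, f (s \ A) = ∑ S ∈ s.powersetCard r, f S := by
  refine sum_nbij' (s \ ·) (s \ ·) ?_ ?_ ?_ ?_ fun _ _ => rfl <;>
    simp +contextual [mem_powersetCard, card_sdiff_of_subset] <;> omega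

theorem sum_powerset_eq_sum_singleton {α M : Type*} [AddCommMonoid M] {s : Finset α}
    {f : Finset α → M} (hf : ∀ A ∈ s.powerset, #A ≠ 1 → f A = 0) :
    ∑ A ∈ s.powerset, f A = ∑ a ∈ s, f {a} := by
  rw [← sum_filter_of_ne fun A hA hne => not_imp_comm.1 (hf A hA) hne, ← powersetCard_eq_filter,
    powersetCard_one, sum_map]
  rfl

end Finset

theorem Matrix.sum_det_principal_submatrix_map {α β R : Type*} [Fintype α] [DecidableEq α]
    [DecidableEq β] [CommRing R] (M : Matrix β β R) (e : α ↪ β) (r : ℕ) :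
    ∑ T ∈ univ.powersetCard r,
        ((M.submatrix e e).submatrix (Subtype.val : T → α) Subtype.val).det =
      ∑ S ∈ (univ.map e).powersetCard r,
        (M.submatrix (Subtype.val : S → β) Subtype.val).det := by
  rw [powersetCard_map, sum_map]
  refine sum_congr rfl fun T _ => ?_
  exact det_submatrix_equiv_self (T.equivMap e) (M.submatrix Subtype.val Subtype.val)

namespace DForm

variable {n : ℕ}

theorem shuffleSign_singleton (a : Fin n) (B : Finset (Fin n)) :
    shuffleSign {a} B = (-1) ^ #{x ∈ B | x < a} := by
  rw [shuffleSign, card_filter]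
  congr 1
  refine sum_congr rfl fun x _ => ?_
  rw [filter_singleton]
  split_ifs <;> rfl

theorem shuffleSign_orderEmbOfFin (s : Finset (Fin n)) {k : ℕ} (h : #s = k) (i : Fin k) :
    shuffleSign {s.orderEmbOfFin h i} (s \ {s.orderEmbOfFin h i}) = (-1) ^ (i : ℕ) := by
  rw [shuffleSign_singleton, sdiff_singleton_eq_erase, filter_erase,
    erase_eq_of_notMem (by simp), card_filter_lt_orderEmbOfFin]

theorem ofMatrix_singleton (h : Matrix (Fin n) (Fin n) ℝ) (i j : Fin n) :
    ofMatrix h {i} {j} = h i j := by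
  simp [ofMatrix, singleton_inj, ite_and]

theorem isOfDeg_ofMatrix (h : Matrix (Fin n) (Fin n) ℝ) : (ofMatrix h).IsOfDeg 1 1 := by
  intro I J hIJ
  obtain ⟨i, j, hij⟩ : ∃ i j, I = {i} ∧ J = {j} := by
    by_contra! hne
    exact hIJ <| sum_eq_zero fun i _ => sum_eq_zero fun j _ =>
      if_neg fun hij => hne i j hij.1 hij.2
  simp [hij]

theorem gMetric_eq_ofMatrix_one : gMetric n = ofMatrix 1 := by
  funext I J
  by_cases hIJ : #I = 1 ∧ #J = 1
  · obtain ⟨i, rfl⟩ := card_eq_one.1 hIJ.1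
    obtain ⟨j, rfl⟩ := card_eq_one.1 hIJ.2
    simp [gMetric, ofMatrix_singleton, Matrix.one_apply]
  · have hzero : ofMatrix (1 : Matrix (Fin n) (Fin n) ℝ) I J = 0 := by
      by_contra hne
      exact hIJ (isOfDeg_ofMatrix 1 I J hne)
    rw [hzero, gMetric, if_neg]
    rintro ⟨rfl, hI⟩
    exact hIJ ⟨hI, hI⟩

theorem IsOfDeg.apply_eq_zero_left {ω : DForm n} {p q : ℕ} (hω : ω.IsOfDeg p q)
    {A : Finset (Fin n)} (hA : #A ≠ p) (B : Finset (Fin n)) : ω A B = 0 := by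
  by_contra hne
  exact hA (hω A B hne).1

theorem IsOfDeg.apply_eq_zero_right {ω : DForm n} {p q : ℕ} (hω : ω.IsOfDeg p q)
    (A : Finset (Fin n)) {B : Finset (Fin n)} (hB : #B ≠ q) : ω A B = 0 := by
  by_contra hne
  exact hB (hω A B hne).2

theorem IsOfDeg.wedge {ω₁ ω₂ : DForm n} {p q p' q' : ℕ} (h₁ : ω₁.IsOfDeg p q)
    (h₂ : ω₂.IsOfDeg p' q') : (wedge ω₁ ω₂).IsOfDeg (p + p') (q + q') := by
  intro I J hIJ
  obtain ⟨A, hA, B, hB, hAB⟩ : ∃ A ∈ I.powerset, ∃ B ∈ J.powerset,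
      shuffleSign A (I \ A) * shuffleSign B (J \ B) * ω₁ A B * ω₂ (I \ A) (J \ B) ≠ 0 := by
    by_contra! hzero
    exact hIJ (sum_eq_zero fun A hA => sum_eq_zero fun B hB => hzero A hA B hB)
  obtain ⟨hp, hq⟩ := h₁ A B (right_ne_zero_of_mul (left_ne_zero_of_mul hAB))
  obtain ⟨hp', hq'⟩ := h₂ _ _ (right_ne_zero_of_mul hAB)
  rw [mem_powerset] at hA hB
  rw [card_sdiff_of_subset hA] at hp'
  rw [card_sdiff_of_subset hB] at hq'
  have := card_le_card hA
  have := card_le_card hB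
  omega

theorem isOfDeg_dpow {ω : DForm n} {p q : ℕ} (hω : ω.IsOfDeg p q) (k : ℕ) :
    (dpow ω k).IsOfDeg (k * p) (k * q) := by
  induction k with
  | zero =>
    intro I J hIJ
    simp only [dpow, ne_eq, ite_eq_right_iff, Classical.not_imp] at hIJ
    simp [hIJ.1]
  | succ k ih => simpa [dpow, add_mul, add_comm] using hω.wedge ih

theorem wedge_apply_of_isOfDeg_one_one {ω : DForm n} (hω : ω.IsOfDeg 1 1) (η : DForm n)
    (I J : Finset (Fin n)) :
    wedge ω η I J = ∑ i ∈ I, ∑ j ∈ J, shuffleSign {i} (I \ {i}) * shuffleSign {j} (J \ {j}) *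
      ω {i} {j} * η (I \ {i}) (J \ {j}) := by
  rw [wedge, sum_powerset_eq_sum_singleton]
  · refine sum_congr rfl fun i _ => sum_powerset_eq_sum_singleton fun B _ hB => ?_
    rw [hω.apply_eq_zero_right _ hB]
    ring
  · intro A _ hA
    refine sum_eq_zero fun B _ => ?_
    rw [hω.apply_eq_zero_left hA]
    ring

theorem dpow_ofMatrix_apply (h : Matrix (Fin n) (Fin n) ℝ) {r : ℕ} {A B : Finset (Fin n)}
    (hA : #A = r) (hB : #B = r) :
    dpow (ofMatrix h) r A B =
      r.factorial * (h.submatrix (A.orderEmbOfFin hA) (B.orderEmbOfFin hB)).det := by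
  induction r generalizing A B with
  | zero =>
    obtain rfl := card_eq_zero.1 hA
    obtain rfl := card_eq_zero.1 hB
    simp [dpow]
  | succ r ih =>
    have hcard : ∀ {s : Finset (Fin n)} (hs : #s = r + 1) (i : Fin (r + 1)),
        #(s.erase (s.orderEmbOfFin hs i)) = r := fun hs i => by
      rw [card_erase_of_mem (orderEmbOfFin_mem _ hs i), hs, Nat.add_sub_cancel]
    have hminor : ∀ i j : Fin (r + 1),
        dpow (ofMatrix h) r (A \ {A.orderEmbOfFin hA i}) (B \ {B.orderEmbOfFin hB j}) =
          r.factorial * (h.submatrix (A.orderEmbOfFin hA ∘ i.succAbove)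
            (B.orderEmbOfFin hB ∘ j.succAbove)).det := fun i j => by
      rw [sdiff_singleton_eq_erase, sdiff_singleton_eq_erase, ih (hcard hA i) (hcard hB j),
        orderEmbOfFin_erase, orderEmbOfFin_erase]
    -- the sum over `j` is the Laplace expansion of the determinant along row `i`
    have hrow : ∀ i : Fin (r + 1), ∑ j : Fin (r + 1), (-1) ^ (i : ℕ) * (-1) ^ (j : ℕ) *
        h (A.orderEmbOfFin hA i) (B.orderEmbOfFin hB j) * (r.factorial *
          (h.submatrix (A.orderEmbOfFin hA ∘ i.succAbove)
            (B.orderEmbOfFin hB ∘ j.succAbove)).det) =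
        r.factorial * (h.submatrix (A.orderEmbOfFin hA) (B.orderEmbOfFin hB)).det := fun i => by
      rw [Matrix.det_succ_row _ i, mul_sum]
      refine sum_congr rfl fun j _ => ?_
      simp only [pow_add, Matrix.submatrix_apply, Matrix.submatrix_submatrix]
      ring
    rw [dpow, wedge_apply_of_isOfDeg_one_one (isOfDeg_ofMatrix h), sum_orderEmbOfFin A hA]
    simp only [sum_orderEmbOfFin B hB, shuffleSign_orderEmbOfFin, ofMatrix_singleton, hminor, hrow]
    rw [sum_const, card_univ, Fintype.card_fin, nsmul_eq_mul, Nat.factorial_succ]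
    push_cast
    ring

theorem dpow_ofMatrix_apply_self (h : Matrix (Fin n) (Fin n) ℝ) {r : ℕ} {S : Finset (Fin n)}
    (hS : #S = r) :
    dpow (ofMatrix h) r S S =
      r.factorial * (h.submatrix (Subtype.val : S → Fin n) Subtype.val).det := by
  rw [dpow_ofMatrix_apply h hS hS,
    ← Matrix.det_submatrix_equiv_self (S.orderIsoOfFin hS).toEquiv]
  rfl

theorem dpow_gMetric_apply (k : ℕ) (A B : Finset (Fin n)) :
    dpow (gMetric n) k A B = if A = B ∧ #A = k then (k.factorial : ℝ) else 0 := by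
  by_cases hc : #A = k ∧ #B = k
  · rw [gMetric_eq_ofMatrix_one, dpow_ofMatrix_apply 1 hc.1 hc.2]
    by_cases hAB : A = B
    · subst hAB
      rw [Matrix.submatrix_one _ (A.orderEmbOfFin hc.1).injective, Matrix.det_one, mul_one,
        if_pos ⟨rfl, hc.1⟩]
    · obtain ⟨a, haA, haB⟩ : ∃ a ∈ A, a ∉ B :=
        not_subset.1 fun hsub => hAB (eq_of_subset_of_card_le hsub (by omega))
      obtain ⟨i, rfl⟩ : a ∈ Set.range (A.orderEmbOfFin hc.1) := by
        rwa [range_orderEmbOfFin, mem_coe]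
      have hrow : ∀ j, (1 : Matrix (Fin n) (Fin n) ℝ).submatrix (A.orderEmbOfFin hc.1)
          (B.orderEmbOfFin hc.2) i j = 0 := fun j =>
        Matrix.one_apply_ne fun hij => haB (hij ▸ orderEmbOfFin_mem B hc.2 j)
      rw [Matrix.det_eq_zero_of_row_eq_zero i hrow, mul_zero, if_neg (hAB ∘ And.left)]
  · have hdeg : (dpow (gMetric n) k).IsOfDeg k k := by
      simpa [gMetric_eq_ofMatrix_one] using isOfDeg_dpow (isOfDeg_ofMatrix 1) k
    rw [if_neg fun hAB : A = B ∧ #A = k => hc ⟨hAB.2, hAB.1 ▸ hAB.2⟩]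
    by_contra hne
    exact hc (by simpa using hdeg A B hne)

theorem wedge_dpow_gMetric_apply_self (k : ℕ) (ω : DForm n) (I : Finset (Fin n)) :
    wedge (dpow (gMetric n) k) ω I I =
      k.factorial * ∑ A ∈ I.powersetCard k, ω (I \ A) (I \ A) := by
  have hdiag : ∀ A ∈ I.powerset, ∑ B ∈ I.powerset,
      shuffleSign A (I \ A) * shuffleSign B (I \ B) * dpow (gMetric n) k A B * ω (I \ A) (I \ B) =
        if #A = k then k.factorial * ω (I \ A) (I \ A) else 0 := by
    intro A hA
    rw [sum_eq_single_of_mem A hA fun B _ hBA => by simp [dpow_gMetric_apply, Ne.symm hBA]]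
    simp only [dpow_gMetric_apply, true_and]
    split_ifs
    · rw [shuffleSign_mul_self, one_mul]
    · rw [mul_zero, zero_mul]
  rw [wedge, sum_congr rfl hdiag, ← sum_filter, ← powersetCard_eq_filter, mul_sum]

end DForm

theorem sMat_eq_sum_det_principal_submatrix {m : ℕ} (M : Matrix (Fin m) (Fin m) ℝ) {r : ℕ}
    (hr : r ≤ m) :
    sMat M r =
      ∑ T ∈ univ.powersetCard r, (M.submatrix (Subtype.val : T → Fin m) Subtype.val).det := by
  have hminors := M.charpoly_coeff_eq_sum_minors r (by simpa using hr)
  rw [Fintype.card_fin] at hminors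
  rw [sMat, hminors, ← mul_assoc, ← mul_pow, neg_mul_neg, one_mul, one_pow, one_mul]

open DForm in
theorem statement2_general (n k r : ℕ) (h : Matrix (Fin n) (Fin n) ℝ)
    (I : Finset (Fin n)) (hI : I.card = k + r) :
    wedge (dpow (gMetric n) k) (dpow (ofMatrix h) r) I I =
      (k.factorial : ℝ) * (r.factorial : ℝ) *
        sMat (Matrix.of fun a b : Fin (k + r) =>
          h (I.orderIsoOfFin hI a) (I.orderIsoOfFin hI b)) r := by
  have hM : (Matrix.of fun a b : Fin (k + r) => h (I.orderIsoOfFin hI a) (I.orderIsoOfFin hI b)) =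
      h.submatrix (I.orderEmbOfFin hI) (I.orderEmbOfFin hI) := rfl
  rw [wedge_dpow_gMetric_apply_self, sum_powersetCard_sdiff hI fun S => dpow (ofMatrix h) r S S,
    sum_congr rfl fun S hS => dpow_ofMatrix_apply_self h (mem_powersetCard.1 hS).2, ← mul_sum,
    hM, sMat_eq_sum_det_principal_submatrix _ (Nat.le_add_left r k), ← mul_assoc]
  congr 1
  conv_lhs => rw [← map_orderEmbOfFin_univ I hI]
  exact (Matrix.sum_det_principal_submatrix_map h _ r).symm

open DForm in
/-- `g^k h^r (e_{i₁}∧…∧e_{i_{k+r}}, e_{i₁}∧…∧e_{i_{k+r}}) = k! r! s_r` of the corresponding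
principal submatrix of `h`. -/
theorem statement2 (n k r : ℕ) (h : Matrix (Fin n) (Fin n) ℝ) (hkr : k + r ≤ n)
    (I : Finset (Fin n)) (hI : I.card = k + r) :
    wedge (dpow (gMetric n) k) (dpow (ofMatrix h) r) I I =
      (k.factorial : ℝ) * (r.factorial : ℝ) *
        sMat (Matrix.of fun a b : Fin (k + r) =>
          h (I.orderIsoOfFin hI a) (I.orderIsoOfFin hI b)) r :=
  statement2_general n k r h I hI
end
end
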